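/- arXiv:0906.2710 — 2 statements merged into one kernel-verified Lean document; each statement's English description precedes it below -/
import Mathlib

section
/- Let φ be an associate of F_a and W a complex vector space. For any a(x), b(x) ∈ ℰ(W), the pairs (1_W, b(x)) and (a(x), 1_W) are φ-quasi compatible (with p = 1), and Y_ℰ^φ(1_W, z) b(x) = b(x), while Y_ℰ^φ(a(x), z) 1_W = a(φ(x,z)); in particular Y_ℰ^φ(a(x), z) 1_W involves only nonnegative powers of z, i.e., lies in ℰ(W)[[z]], and its constant term in z (its value at z = 0) is a(x). -/
noncomputable section
open scoped Classical

abbrev L : Type := LaurentSeries ℂ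
abbrev LZ : Type := PowerSeries L

def Xl : L := HahnSeries.single 1 1

/-- coefficient of `z^n x^j` in an element of `ℂ((x))[[z]]`. -/
def lzCoeff (f : LZ) (n : ℕ) (j : ℤ) : ℂ := ((PowerSeries.coeff (R := L) n) f).coeff j

/-- integer powers in a commutative ring, via `Ring.inverse` for negative exponents. -/
def zpowR {R : Type*} [CommRing R] (g : R) (m : ℤ) : R :=
  if 0 ≤ m then g ^ m.toNat else Ring.inverse g ^ (-m).toNat

/-- the Laurent series with prescribed coefficients, when it exists (else `0`). -/
def mkL (c : ℤ → ℂ) : L :=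
  if h : ∃ g : L, ∀ j, g.coeff j = c j then h.choose else 0

def mkLZ (c : ℕ → ℤ → ℂ) : LZ :=
  if h : ∃ g : LZ, ∀ n j, lzCoeff g n j = c n j then h.choose else 0

/-- Substitution `f(φ(x,z))` of `φ(x,z) ∈ ℂ((x))[[z]]` into `f ∈ ℂ((x))`. -/
def substL (f : L) (φ : LZ) : LZ :=
  mkLZ fun n j => ∑ᶠ m : ℤ, f.coeff m * lzCoeff (zpowR φ m) n j

/-- `φ(φ(x,x₂),x₀)` as an element of `ℂ((x))[[x₂]][[x₀]]` (outer variable `x₀`). -/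
def assocLHS (φ : LZ) : PowerSeries LZ :=
  PowerSeries.mk fun n => substL ((PowerSeries.coeff (R := L) n) φ) φ

/-- `φ(x,x₀+x₂)` as an element of `ℂ((x))[[x₂]][[x₀]]` (outer variable `x₀`). -/
def assocRHS (φ : LZ) : PowerSeries LZ :=
  PowerSeries.mk fun n => PowerSeries.mk fun m =>
    (((n+m).choose n : ℂ)) • (PowerSeries.coeff (R := L) (n+m)) φ

/-- `φ(x,z) ∈ ℂ((x))[[z]]` is an associate of the additive formal group:
`φ(x,0) = x` and `φ(φ(x,x₂),x₀) = φ(x,x₀+x₂)`. -/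
def IsAssociate (φ : LZ) : Prop :=
  (PowerSeries.constantCoeff (R := L)) φ = Xl ∧ assocLHS φ = assocRHS φ

/-- the formal derivative `d/dx` on `ℂ((x))`. -/
def lderiv (f : L) : L := mkL fun j => ((j+1 : ℤ) : ℂ) * f.coeff (j+1)

/-- the operator `p(x) d/dx` on `ℂ((x))`. -/
def pd (p : L) : L → L := fun f => p * lderiv f

/-- `e^{z p(x) d/dx} x = Σ_{n≥0} (z^n/n!) (p(x)d/dx)^n x ∈ ℂ((x))[[z]]`. -/
def expFlow (p : L) : LZ :=
  PowerSeries.mk fun n => ((n.factorial : ℂ))⁻¹ • ((pd p)^[n] Xl)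

/-- the exponent `(a, b)` as a multidegree for two-variable power series. -/
def idx2 (a b : ℕ) : Fin 2 →₀ ℕ := Finsupp.single 0 a + Finsupp.single 1 b

/-- Substitution `p(φ(x,z), x)` of `x₁ = φ(x,z)`, `x₂ = x` into `p(x₁,x₂) ∈ ℂ[[x₁,x₂]]`. -/
def substMv (p : MvPowerSeries (Fin 2) ℂ) (φ : LZ) : LZ :=
  mkLZ fun n j => ∑ᶠ ab : ℕ × ℕ,
    (MvPowerSeries.coeff (R := ℂ) (idx2 ab.1 ab.2) p) *
      lzCoeff (φ ^ ab.1 * (PowerSeries.C (R := L) Xl) ^ ab.2) n j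

variable (W : Type) [AddCommGroup W] [Module ℂ W]

/-- `ℰ(W) = Hom(W, W((x)))`. -/
abbrev EW := W →ₗ[ℂ] HahnSeries ℤ W

variable {W}

/-- the element of `ℰ(W)` with prescribed coefficients, when it exists (else `0`). -/
def mkEW (c : W → ℤ → W) : EW W :=
  if h : ∃ g : EW W, ∀ w j, (g w).coeff j = c w j then h.choose else 0

/-- the identity operator `1_W`, as the element `1_W x^0` of `ℰ(W)`. -/
def oneEW : EW W := mkEW fun w j => if j = 0 then w else 0

/-- the raw coefficient function of `a(x₁)b(x₂)` : coefficient of `x₁^m x₂^n` applied to `w`. -/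
def c2 (a b : EW W) (w : W) (m n : ℤ) : W := (a ((b w).coeff n)).coeff m

/-- the raw coefficient function of `u(x₂)v(x₁)` (first index: exponent of `x₁`). -/
def c2swap (u v : EW W) (w : W) (m n : ℤ) : W := (u ((v w).coeff m)).coeff n

/-- a raw two-variable series `W → W[[x₁^{±1},x₂^{±1}]]` lies in `Hom(W, W((x₁,x₂)))`. -/
def IsLT2 (F : W → ℤ → ℤ → W) : Prop :=
  ∀ w, ∃ N : ℤ, ∀ m n : ℤ, (m < N ∨ n < N) → F w m n = 0

/-- multiplication of a raw two-variable series by `p(x₁,x₂) ∈ ℂ[[x₁,x₂]]`. -/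
def ps2Smul (p : MvPowerSeries (Fin 2) ℂ) (F : W → ℤ → ℤ → W) : W → ℤ → ℤ → W :=
  fun w m n => ∑ᶠ ab : ℕ × ℕ,
    (MvPowerSeries.coeff (R := ℂ) (idx2 ab.1 ab.2) p) • F w (m - ab.1) (n - ab.2)

/-- multiplication of a raw series in `(z, x)` by `s ∈ ℂ((x))[[z]]`
(first index: exponent of `z`; second: exponent of `x`). -/
def lzSmul (s : LZ) (F : W → ℤ → ℤ → W) : W → ℤ → ℤ → W :=
  fun w n j => ∑ᶠ ab : ℕ × ℤ, lzCoeff s ab.1 ab.2 • F w (n - ab.1) (j - ab.2)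

/-- substitution `x₁ = φ(x,z)` into a raw two-variable series `F(x₁, x₂)` (with `x₂` renamed
to `x`); the result is indexed by (exponent of `z`, exponent of `x`). -/
def substX1 (φ : LZ) (F : W → ℤ → ℤ → W) : W → ℤ → ℤ → W :=
  fun w n j =>
    if 0 ≤ n then
      ∑ᶠ mk : ℤ × ℤ, lzCoeff (zpowR φ mk.1) n.toNat (j - mk.2) • F w mk.1 mk.2
    else 0

/-- `Y_ℰ^φ(a(x),z)b(x)`, as a raw series (first index: exponent of `z`; second: exponent
of `x`): the unique element `Y` of `ℰ(W)((z))` with `p(φ(x,z),x)·Y = (p(x₁,x)a(x₁)b(x))|_{x₁=φ(x,z)}`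
for a (any) modifier `p` as in the definition of φ-quasi compatibility; junk `0` if none exists. -/
def Yφ (φ : LZ) (a b : EW W) : W → ℤ → ℤ → W :=
  if h : ∃ Y : W → ℤ → ℤ → W,
      (∃ n₀ : ℤ, ∀ w n j, n < n₀ → Y w n j = 0) ∧
      (∀ n : ℤ, ∃ c : EW W, ∀ w j, (c w).coeff j = Y w n j) ∧
      ∃ p : MvPowerSeries (Fin 2) ℂ, substMv p φ ≠ 0 ∧ IsLT2 (ps2Smul p (c2 a b)) ∧
        lzSmul (substMv p φ) Y = substX1 φ (ps2Smul p (c2 a b))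
  then h.choose else fun _ _ _ => 0

/-- the coefficient of `z^n` in `Y_ℰ^φ(a(x),z)b(x)`, as an element of `ℰ(W)`. -/
def YatZ (φ : LZ) (a b : EW W) (n : ℤ) : EW W :=
  mkEW fun w j => Yφ φ a b w n j

/-- `a(x)_n^φ b(x)`, the coefficient of `z^{-n-1}` in `Y_ℰ^φ(a(x),z)b(x)`. -/
def YφCoef (φ : LZ) (a b : EW W) (n : ℤ) : EW W := YatZ φ a b (-n-1)

/-- the ordered pair `(a(x),b(x))` is φ-quasi compatible. -/
def PairQC (φ : LZ) (a b : EW W) : Prop :=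
  ∃ p : MvPowerSeries (Fin 2) ℂ, substMv p φ ≠ 0 ∧ IsLT2 (ps2Smul p (c2 a b))

/-- the ordered pair `(a(x),b(x))` is quasi compatible. -/
def PairQuasiCompat (a b : EW W) : Prop :=
  ∃ p : MvPowerSeries (Fin 2) ℂ, p ≠ 0 ∧ IsLT2 (ps2Smul p (c2 a b))

/-- the raw coefficient function of the product `a₁(x₁)⋯a_r(x_r)` applied to `w`. -/
def prodCoeff : (r : ℕ) → (Fin r → EW W) → (Fin r → ℤ) → W → W
  | 0, _, _, w => w
  | r+1, as, ms, w =>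
      ((as 0) (prodCoeff r (fun i => as i.succ) (fun i => ms i.succ) w)).coeff (ms 0)

/-- multiplication of a raw `r`-variable series by `P ∈ ℂ[[x₁,…,x_r]]`. -/
def mvSmul {r : ℕ} (P : MvPowerSeries (Fin r) ℂ) (F : (Fin r → ℤ) → W) :
    (Fin r → ℤ) → W :=
  fun m => ∑ᶠ k : Fin r →₀ ℕ, MvPowerSeries.coeff (R := ℂ) k P • F (fun i => m i - k i)

/-- the series `p(x_i, x_j) ∈ ℂ[[x₁,…,x_r]]` obtained from `p(x₁,x₂) ∈ ℂ[[x₁,x₂]]`. -/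
def pPair {r : ℕ} (p : MvPowerSeries (Fin 2) ℂ) (i j : Fin r) : MvPowerSeries (Fin r) ℂ :=
  fun k => if ∀ l, l ≠ i → l ≠ j → k l = 0 then MvPowerSeries.coeff (R := ℂ) (idx2 (k i) (k j)) p else 0

/-- the product `Π_{1 ≤ i < j ≤ r} p(x_i,x_j) ∈ ℂ[[x₁,…,x_r]]`. -/
def bigP (r : ℕ) (p : MvPowerSeries (Fin 2) ℂ) : MvPowerSeries (Fin r) ℂ :=
  ∏ ij ∈ Finset.univ.filter (fun ij : Fin r × Fin r => ij.1 < ij.2), pPair p ij.1 ij.2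

/-- a raw `r`-variable series `W → W[[x₁^{±1},…,x_r^{±1}]]` lies in `Hom(W, W((x₁,…,x_r)))`. -/
def IsLTrunc {r : ℕ} (F : W → (Fin r → ℤ) → W) : Prop :=
  ∀ w, ∃ N : ℤ, ∀ m : Fin r → ℤ, (∃ i, m i < N) → F w m = 0

/-- the finite sequence `as` in `ℰ(W)` is φ-quasi compatible. -/
def SeqQC (φ : LZ) {r : ℕ} (as : Fin r → EW W) : Prop :=
  ∃ p : MvPowerSeries (Fin 2) ℂ, substMv p φ ≠ 0 ∧
    IsLTrunc (fun w => mvSmul (bigP r p) (fun m => prodCoeff r as m w))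

/-- the finite sequence `as` in `ℰ(W)` is quasi compatible. -/
def SeqQuasiCompat {r : ℕ} (as : Fin r → EW W) : Prop :=
  ∃ p : MvPowerSeries (Fin 2) ℂ, p ≠ 0 ∧
    IsLTrunc (fun w => mvSmul (bigP r p) (fun m => prodCoeff r as m w))

/-- the finite sequence `as` in `ℰ(W)` is compatible (modifier `(x₁-x₂)^k`). -/
def SeqCompat {r : ℕ} (as : Fin r → EW W) : Prop :=
  ∃ k : ℕ,
    IsLTrunc (fun w => mvSmul (bigP r ((MvPowerSeries.X 0 - MvPowerSeries.X 1) ^ k))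
      (fun m => prodCoeff r as m w))

/-- a subset of `ℰ(W)` is φ-quasi compatible. -/
def SetQC (φ : LZ) (U : Set (EW W)) : Prop :=
  ∀ (r : ℕ) (as : Fin r → EW W), (∀ i, as i ∈ U) → SeqQC φ as

/-- a subset of `ℰ(W)` is quasi compatible. -/
def SetQuasiCompat (U : Set (EW W)) : Prop :=
  ∀ (r : ℕ) (as : Fin r → EW W), (∀ i, as i ∈ U) → SeqQuasiCompat as

/-- a subset of `ℰ(W)` is compatible. -/
def SetCompat (U : Set (EW W)) : Prop :=
  ∀ (r : ℕ) (as : Fin r → EW W), (∀ i, as i ∈ U) → SeqCompat as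

/-- a subspace `V ⊆ ℰ(W)` is `Y_ℰ^φ`-closed. -/
def YClosed (φ : LZ) (V : Submodule ℂ (EW W)) : Prop :=
  ∀ a ∈ V, ∀ b ∈ V, ∀ n : ℤ, YφCoef φ a b n ∈ V

/-- the raw coefficient function of `a(φ(x,z))` (first index: exponent of `z`;
second: exponent of `x`). -/
def substAphi (φ : LZ) (a : EW W) : W → ℤ → ℤ → W :=
  fun w n j =>
    if 0 ≤ n then ∑ᶠ m : ℤ, lzCoeff (zpowR φ m) n.toNat j • (a w).coeff m else 0

/-!
With the modifier `p = 1` both pairs are already lower truncated, and `Y_ℰ^φ(a(x),z)b(x)` is the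
substitution `x₁ = φ(x,z)` into `a(x₁)b(x)`: for `a = 1_W` only `x₁⁰` occurs, which leaves `b(x)`,
and for `b = 1_W` it is `a(φ(x,z))`, whose constant term is `a(x)` since `φ(x,0) = x`.
What has to be shown is that the modifier chosen in the definition of `Y_ℰ^φ` does not matter.
Substituting `x₁ = φ(x,z)` into `p(x₁,x)F(x₁,x)` gives `p(φ(x,z),x)` times the substitution into
`F`: all sums involved are finite because the `z^A`-coefficient of `φ(x,z)^m` has `x`-order at least
`m + D` with `D` depending only on a bound for `A`. And multiplication by a nonzero
`p(φ(x,z),x) ∈ ℂ((x))[[z]]` is injective on `ℰ(W)((z))`: compare leading coefficients.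
-/

open Function

lemma lzCoeff_ext {f g : LZ} (h : ∀ n j, lzCoeff f n j = lzCoeff g n j) : f = g :=
  PowerSeries.ext fun n => HahnSeries.coeff_injective (funext (h n))

lemma mkLZ_eq {c : ℕ → ℤ → ℂ} {g : LZ} (h : ∀ n j, lzCoeff g n j = c n j) : mkLZ c = g := by
  have hex : ∃ g : LZ, ∀ n j, lzCoeff g n j = c n j := ⟨g, h⟩
  rw [mkLZ, dif_pos hex]
  exact lzCoeff_ext fun n j => (hex.choose_spec n j).trans (h n j).symm

lemma lzCoeff_one (n : ℕ) (j : ℤ) :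
    lzCoeff (1 : LZ) n j = if n = 0 ∧ j = 0 then 1 else 0 := by
  by_cases hn : n = 0 <;> simp [lzCoeff, PowerSeries.coeff_one, hn, HahnSeries.coeff_one]

lemma LaurentSeries.coeff_mul_eq_finsum (u v : L) (j : ℤ) :
    (u * v).coeff j = ∑ᶠ B : ℤ, u.coeff B * v.coeff (j - B) := by
  set S := Finset.antidiagonal u.isPWO_support v.isPWO_support j
  have hsupp : support (fun B => u.coeff B * v.coeff (j - B)) ⊆ S.image Prod.fst := by
    intro B hB
    refine Finset.mem_image.mpr ⟨(B, j - B), Finset.mem_antidiagonal.mpr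
      ⟨left_ne_zero_of_mul hB, right_ne_zero_of_mul hB, by ring⟩, rfl⟩
  have hinj : Set.InjOn Prod.fst (S : Set (ℤ × ℤ)) := fun x hx y hy hxy => by
    have := (Finset.mem_antidiagonal.mp hx).2.2
    have := (Finset.mem_antidiagonal.mp hy).2.2
    exact Prod.ext hxy (by omega)
  rw [HahnSeries.coeff_mul, finsum_eq_sum_of_support_subset _ hsupp, Finset.sum_image hinj]
  refine Finset.sum_congr rfl fun x hx => ?_
  obtain ⟨-, -, hx⟩ := Finset.mem_antidiagonal.mp hx
  rw [show x.2 = j - x.1 by omega]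

lemma lzCoeff_mul (f g : LZ) (n : ℕ) (j : ℤ) :
    lzCoeff (f * g) n j = ∑ A ∈ Finset.range (n + 1),
      ∑ᶠ B : ℤ, lzCoeff f A B * lzCoeff g (n - A) (j - B) := by
  simp only [lzCoeff, PowerSeries.coeff_mul, Finset.Nat.sum_antidiagonal_eq_sum_range_succ_mk,
    HahnSeries.coeff_sum, LaurentSeries.coeff_mul_eq_finsum]

lemma Xl_zpow (m : ℤ) : (Xl : L) ^ m = HahnSeries.single m 1 := by
  have hpow (n : ℕ) : (Xl : L) ^ n = HahnSeries.single (n : ℤ) 1 := by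
    induction n with
    | zero => simp
    | succ k ih => rw [pow_succ, ih, Xl, HahnSeries.single_mul_single, mul_one]; push_cast; rfl
  obtain ⟨n, rfl | rfl⟩ := m.eq_nat_or_neg
  · simpa using hpow n
  · rw [zpow_neg, zpow_natCast, hpow]
    refine inv_eq_of_mul_eq_one_right ?_
    rw [HahnSeries.single_mul_single, mul_one, add_neg_cancel, HahnSeries.single_zero_one]

section ZpowR

variable {R : Type*} [CommRing R]

lemma zpowR_natCast (g : R) (n : ℕ) : zpowR g n = g ^ n := by
  simp [zpowR]

lemma zpowR_zero (g : R) : zpowR g 0 = 1 := by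
  simp [zpowR]

lemma zpowR_units (u : Rˣ) (m : ℤ) : zpowR (u : R) m = ((u ^ m : Rˣ) : R) := by
  obtain ⟨n, rfl | rfl⟩ := m.eq_nat_or_neg
  · simp [zpowR]
  · rcases n.eq_zero_or_pos with rfl | hn
    · simp [zpowR]
    · simp [zpowR, hn.ne']

lemma zpowR_add {g : R} (hg : IsUnit g) (m m' : ℤ) : zpowR g (m + m') = zpowR g m * zpowR g m' := by
  obtain ⟨u, rfl⟩ := hg
  simp only [zpowR_units, zpow_add, Units.val_mul]

end ZpowR

def CoeffOrderBound (N : ℕ) (c e : ℤ) (g : LZ) : Prop :=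
  ∀ k ≤ N, ∀ j < e + k * c, lzCoeff g k j = 0

namespace CoeffOrderBound

variable {N : ℕ} {c e f : ℤ} {g h : LZ}

lemma one : CoeffOrderBound N c 0 1 := by
  intro k _ j hj
  rw [lzCoeff_one, if_neg]
  rintro ⟨rfl, rfl⟩
  simp at hj

lemma mul (hg : CoeffOrderBound N c e g) (hh : CoeffOrderBound N c f h) :
    CoeffOrderBound N c (e + f) (g * h) := by
  intro k hk j hj
  rw [lzCoeff_mul]
  refine Finset.sum_eq_zero fun A hA => finsum_eq_zero_of_forall_eq_zero fun B => ?_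
  have hA : A ≤ k := Nat.lt_succ_iff.mp (Finset.mem_range.mp hA)
  by_cases hB : B < e + A * c
  · rw [hg A (by omega) B hB, zero_mul]
  · have hcast : ((k - A : ℕ) : ℤ) = k - A := by omega
    rw [hh (k - A) (by omega) (j - B) (by rw [hcast]; nlinarith), mul_zero]

lemma pow (hg : CoeffOrderBound N c e g) (n : ℕ) : CoeffOrderBound N c (n * e) (g ^ n) := by
  induction n with
  | zero => simpa using one
  | succ n ih => simpa [pow_succ, add_mul] using ih.mul hg

lemma mono {c' : ℤ} (hg : CoeffOrderBound N c e g) (hc : c' ≤ c) : CoeffOrderBound N c' e g :=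
  fun k hk j hj => hg k hk j (by nlinarith)

lemma exists_of_coeff_zero (hg : ∀ j < e, lzCoeff g 0 j = 0) (N : ℕ) :
    ∃ c, CoeffOrderBound N c e g := by
  obtain ⟨M, hM⟩ := ((Finset.range (N + 1)).image
    fun k => e - (PowerSeries.coeff (R := L) k g).order).exists_le
  refine ⟨min 0 (-M), fun k hk j hj => ?_⟩
  rcases k.eq_zero_or_pos with rfl | hk0
  · exact hg j (by simpa using hj)
  · have hkM := hM _ (Finset.mem_image_of_mem _ (Finset.mem_range.mpr (Nat.lt_succ_of_le hk)))
    have : (k : ℤ) * min 0 (-M) ≤ min 0 (-M) := by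
      nlinarith [min_le_left (0 : ℤ) (-M), (Nat.one_le_cast (α := ℤ)).mpr hk0]
    exact HahnSeries.coeff_eq_zero_of_lt_order (by omega)

end CoeffOrderBound

section Associate

variable {φ : LZ}

lemma isUnit_of_constantCoeff_eq_Xl (hφ : PowerSeries.constantCoeff (R := L) φ = Xl) :
    IsUnit φ :=
  PowerSeries.isUnit_iff_constantCoeff.mpr
    (by rw [hφ]; exact isUnit_iff_ne_zero.mpr (HahnSeries.single_ne_zero one_ne_zero))

lemma lzCoeff_zpowR_zero (hφ : PowerSeries.constantCoeff (R := L) φ = Xl) (m j : ℤ) :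
    lzCoeff (zpowR φ m) 0 j = if j = m then 1 else 0 := by
  obtain ⟨u, rfl⟩ := isUnit_of_constantCoeff_eq_Xl hφ
  have hc : PowerSeries.constantCoeff (R := L) ((u ^ m : LZˣ) : LZ) = Xl ^ m := by
    change ((Units.map (PowerSeries.constantCoeff (R := L) : LZ →* L) (u ^ m) : Lˣ) : L) = _
    rw [map_zpow, Units.val_zpow_eq_zpow_val, ← hφ]
    rfl
  rw [lzCoeff, zpowR_units, PowerSeries.coeff_zero_eq_constantCoeff, hc, Xl_zpow,
    HahnSeries.coeff_single]
  congr

lemma exists_lzCoeff_zpowR_eq_zero (hφ : PowerSeries.constantCoeff (R := L) φ = Xl)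
    (N : ℕ) : ∃ D : ℤ, ∀ (m : ℤ) (A : ℕ) (i : ℤ), A ≤ N → i < m + D →
      lzCoeff (zpowR φ m) A i = 0 := by
  have hzero (m : ℤ) : ∀ j < m, lzCoeff (zpowR φ m) 0 j = 0 := fun j hj => by
    rw [lzCoeff_zpowR_zero hφ, if_neg hj.ne]
  obtain ⟨c₁, h₁⟩ := CoeffOrderBound.exists_of_coeff_zero (hzero 1) N
  obtain ⟨c₂, h₂⟩ := CoeffOrderBound.exists_of_coeff_zero (hzero (-1)) N
  set c := min (min c₁ c₂) 0
  have hc₁ : c ≤ c₁ := (min_le_left _ _).trans (min_le_left _ _)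
  have hc₂ : c ≤ c₂ := (min_le_left _ _).trans (min_le_right _ _)
  refine ⟨N * c, fun m A i hA hi => ?_⟩
  have hbound : CoeffOrderBound N c m (zpowR φ m) := by
    obtain ⟨n, rfl | rfl⟩ := m.eq_nat_or_neg
    · simpa [zpowR] using (h₁.mono hc₁).pow n
    · rcases n.eq_zero_or_pos with rfl | hn
      · simpa [zpowR] using CoeffOrderBound.one (N := N) (c := c)
      · simpa [zpowR, hn.ne'] using (h₂.mono hc₂).pow n
  refine hbound A hA i ?_
  nlinarith [min_le_right (min c₁ c₂) 0]

lemma lzCoeff_zpowR_add (hφ : PowerSeries.constantCoeff (R := L) φ = Xl)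
    (m m' : ℤ) (N : ℕ) (i : ℤ) :
    lzCoeff (zpowR φ (m + m')) N i = ∑ᶠ AB : ℕ × ℤ, if AB.1 ≤ N then
      lzCoeff (zpowR φ m) AB.1 AB.2 * lzCoeff (zpowR φ m') (N - AB.1) (i - AB.2) else 0 := by
  obtain ⟨D, hD⟩ := exists_lzCoeff_zpowR_eq_zero hφ N
  have hfin : HasFiniteSupport fun AB : ℕ × ℤ => if AB.1 ≤ N then
      lzCoeff (zpowR φ m) AB.1 AB.2 * lzCoeff (zpowR φ m') (N - AB.1) (i - AB.2) else 0 := by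
    refine (Set.finite_Icc ((0 : ℕ), m + D) (N, i - m' - D)).subset fun ⟨A, B⟩ hAB => ?_
    have hA : A ≤ N := by by_contra h; simp [h] at hAB
    rw [mem_support, if_pos hA] at hAB
    have h₁ := mt (hD m A B hA) (left_ne_zero_of_mul hAB)
    have h₂ := mt (hD m' (N - A) (i - B) (by omega)) (right_ne_zero_of_mul hAB)
    simp only [Set.mem_Icc, Prod.mk_le_mk]
    omega
  rw [zpowR_add (isUnit_of_constantCoeff_eq_Xl hφ), lzCoeff_mul, finsum_curry _ hfin,
    finsum_eq_sum_of_support_subset (s := Finset.range (N + 1))]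
  · refine Finset.sum_congr rfl fun A hA => finsum_congr fun B => ?_
    rw [if_pos (Nat.lt_succ_iff.mp (Finset.mem_range.mp hA))]
  · intro A hA
    by_contra h
    simp only [Finset.coe_range, Set.mem_Iio, not_lt] at h
    exact hA (finsum_eq_zero_of_forall_eq_zero fun B => if_neg (by omega))

lemma lzCoeff_substMv {p : MvPowerSeries (Fin 2) ℂ} (hs : substMv p φ ≠ 0)
    (n : ℕ) (j : ℤ) : lzCoeff (substMv p φ) n j = ∑ᶠ ab : ℕ × ℕ,
      MvPowerSeries.coeff (idx2 ab.1 ab.2) p * lzCoeff (φ ^ ab.1) n (j - ab.2) := by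
  have hX (g : LZ) (β : ℕ) (j : ℤ) :
      lzCoeff (g * PowerSeries.C (R := L) Xl ^ β) n j = lzCoeff g n (j - β) := by
    rw [lzCoeff, ← map_pow, PowerSeries.coeff_mul_C, ← zpow_natCast, Xl_zpow]
    simpa [lzCoeff] using HahnSeries.coeff_mul_single_add (r := (1 : ℂ))
      (x := PowerSeries.coeff n g) (a := j - β) (b := β)
  unfold substMv mkLZ at hs ⊢
  split_ifs at hs ⊢ with h
  · rw [h.choose_spec]
    exact finsum_congr fun ab => by rw [hX]
  · exact absurd rfl hs

lemma coeff_idx2_one (α β : ℕ) :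
    MvPowerSeries.coeff (idx2 α β) (1 : MvPowerSeries (Fin 2) ℂ) =
      if α = 0 ∧ β = 0 then 1 else 0 := by
  have h : idx2 α β = 0 ↔ α = 0 ∧ β = 0 := by
    simp [idx2, Finsupp.ext_iff, Fin.forall_fin_two]
  simp only [MvPowerSeries.coeff_one, h]

lemma finsum_coeff_idx2_one {M : Type*} [AddCommMonoid M] (f : ℕ × ℕ → ℂ → M)
    (hf : ∀ ab, f ab 0 = 0) :
    ∑ᶠ ab : ℕ × ℕ, f ab (MvPowerSeries.coeff (idx2 ab.1 ab.2) 1) = f (0, 0) 1 := by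
  rw [finsum_eq_single _ (0, 0) fun ab hab => ?_]
  · simp [coeff_idx2_one]
  · rw [coeff_idx2_one, if_neg fun h => hab (Prod.ext h.1 h.2), hf]

lemma substMv_one (φ : LZ) : substMv 1 φ = 1 :=
  mkLZ_eq fun n j => by
    rw [finsum_coeff_idx2_one (fun ab r => r * lzCoeff (φ ^ ab.1 * _ ^ ab.2) n j) (by simp)]
    simp

lemma ps2Smul_one (F : W → ℤ → ℤ → W) : ps2Smul 1 F = F := by
  funext w m n
  rw [ps2Smul, finsum_coeff_idx2_one (fun ab r => r • F w (m - ab.1) (n - ab.2)) (by simp)]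
  simp

lemma lzSmul_one (Y : W → ℤ → ℤ → W) : lzSmul 1 Y = Y := by
  funext w n j
  rw [lzSmul, finsum_eq_single _ (0, 0) fun AB hAB => ?_]
  · simp [lzCoeff_one]
  · rw [lzCoeff_one, if_neg fun h => hAB (Prod.ext h.1 h.2), zero_smul]

section Multiplicativity

variable {p : MvPowerSeries (Fin 2) ℂ} {F : W → ℤ → ℤ → W}

/-- The summand, indexed by `((A, B), (α, β), (m, k))`, of the sum that both sides of
`substX1_ps2Smul` expand to at `z^N x^j`: the coefficient of `z^A x^B` in `p_{αβ} φ(x,z)^α x^β`,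
times that of `z^(N-A) x^(j-B-k)` in `φ(x,z)^m`, times `F_{m,k}`. -/
def substTerm (φ : LZ) (p : MvPowerSeries (Fin 2) ℂ) (F : W → ℤ → ℤ → W) (w : W) (N : ℕ) (j : ℤ)
    (x : (ℕ × ℤ) × (ℕ × ℕ) × (ℤ × ℤ)) : W :=
  if x.1.1 ≤ N then
    (MvPowerSeries.coeff (idx2 x.2.1.1 x.2.1.2) p * lzCoeff (φ ^ x.2.1.1) x.1.1 (x.1.2 - x.2.1.2) *
      lzCoeff (zpowR φ x.2.2.1) (N - x.1.1) (j - x.1.2 - x.2.2.2)) • F w x.2.2.1 x.2.2.2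
  else 0

lemma hasFiniteSupport_substTerm (hφ : PowerSeries.constantCoeff (R := L) φ = Xl) (hF : IsLT2 F)
    (w : W) (N : ℕ) (j : ℤ) : HasFiniteSupport (substTerm φ p F w N j) := by
  obtain ⟨M, hM⟩ := hF w
  obtain ⟨D, hD⟩ := exists_lzCoeff_zpowR_eq_zero hφ N
  set K := (j - 2 * M - 2 * D).toNat
  refine (Set.finite_Icc (((0 : ℕ), D), ((0 : ℕ), (0 : ℕ)), (M, M))
    ((N, j - 2 * M - D), (K, K), (j - M - 2 * D, j - M - 2 * D))).subset
    fun ⟨⟨A, B⟩, ⟨α, β⟩, ⟨m, k⟩⟩ hx => ?_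
  simp only [substTerm, mem_support, ite_ne_right_iff, smul_ne_zero_iff, mul_ne_zero_iff] at hx
  obtain ⟨hA, ⟨⟨-, he⟩, hc⟩, hFmk⟩ := hx
  have h₁ := mt (hD α A (B - β) hA) (by rwa [zpowR_natCast])
  have h₂ := mt (hD m (N - A) (j - B - k) (by omega)) hc
  have h₃ := mt (hM m k) hFmk
  simp only [Set.mem_Icc, Prod.mk_le_mk]
  omega

lemma lzSmul_substMv_substX1_eq_finsum (hs : substMv p φ ≠ 0) (w : W) (N : ℕ) (j : ℤ) :
    lzSmul (substMv p φ) (substX1 φ F) w N j =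
      ∑ᶠ (AB : ℕ × ℤ) (ab : ℕ × ℕ) (mk : ℤ × ℤ), substTerm φ p F w N j (AB, ab, mk) := by
  refine finsum_congr fun AB => ?_
  by_cases hA : AB.1 ≤ N
  · rw [substX1, if_pos (by omega), lzCoeff_substMv hs, finsum_smul]
    refine finsum_congr fun ab => ?_
    rw [smul_finsum]
    refine finsum_congr fun mk => ?_
    rw [substTerm, if_pos hA, smul_smul, show ((N : ℤ) - AB.1).toNat = N - AB.1 by omega]
  · rw [substX1, if_neg (by omega), smul_zero]
    exact (finsum_eq_zero_of_forall_eq_zero fun ab =>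
      finsum_eq_zero_of_forall_eq_zero fun mk => if_neg hA).symm

/-- Summing `substTerm` over `(A, B)` first collapses, via `φ ^ (α + m) = φ ^ α * φ ^ m`. -/
lemma finsum_substTerm (hφ : PowerSeries.constantCoeff (R := L) φ = Xl) (hF : IsLT2 F)
    (w : W) (N : ℕ) (j : ℤ) : ∑ᶠ x, substTerm φ p F w N j x = ∑ᶠ y : (ℕ × ℕ) × (ℤ × ℤ),
      (MvPowerSeries.coeff (idx2 y.1.1 y.1.2) p *
        lzCoeff (zpowR φ (y.1.1 + y.2.1)) N (j - y.1.2 - y.2.2)) • F w y.2.1 y.2.2 := by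
  have ht := hasFiniteSupport_substTerm (p := p) hφ hF w N j
  rw [← finsum_comp_equiv (Equiv.prodComm _ _),
    finsum_curry _ (ht.preimage (Equiv.prodComm _ _).injective.injOn)]
  refine finsum_congr fun ⟨⟨α, β⟩, ⟨m, k⟩⟩ => ?_
  rw [lzCoeff_zpowR_add hφ, mul_finsum, finsum_smul,
    ← finsum_comp_equiv ((Equiv.refl ℕ).prodCongr (Equiv.addRight (β : ℤ)))]
  refine finsum_congr fun ⟨A, B⟩ => ?_
  simp only [substTerm, Equiv.prodComm_apply, Prod.swap, Equiv.prodCongr_apply, Equiv.coe_refl,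
    Equiv.coe_addRight, Prod.map, id, zpowR_natCast, add_sub_cancel_right]
  split_ifs
  · rw [show j - (B + β) - k = j - β - k - B by ring, mul_assoc]
  · simp

lemma substX1_ps2Smul_eq_finsum (hφ : PowerSeries.constantCoeff (R := L) φ = Xl) (hF : IsLT2 F)
    (w : W) (N : ℕ) (j : ℤ) : substX1 φ (ps2Smul p F) w N j = ∑ᶠ y : (ℕ × ℕ) × (ℤ × ℤ),
      (MvPowerSeries.coeff (idx2 y.1.1 y.1.2) p *
        lzCoeff (zpowR φ (y.1.1 + y.2.1)) N (j - y.1.2 - y.2.2)) • F w y.2.1 y.2.2 := by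
  obtain ⟨M, hM⟩ := hF w
  obtain ⟨D, hD⟩ := exists_lzCoeff_zpowR_eq_zero hφ N
  have hfin : HasFiniteSupport fun x : (ℤ × ℤ) × (ℕ × ℕ) =>
      (lzCoeff (zpowR φ x.1.1) N (j - x.1.2) * MvPowerSeries.coeff (idx2 x.2.1 x.2.2) p) •
        F w (x.1.1 - x.2.1) (x.1.2 - x.2.2) := by
    set K := (j - 2 * M - D).toNat
    refine (Set.finite_Icc ((M, M), ((0 : ℕ), (0 : ℕ))) ((j - M - D, j - M - D), (K, K))).subset
      fun ⟨⟨m, k⟩, ⟨α, β⟩⟩ hx => ?_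
    simp only [mem_support, smul_ne_zero_iff, mul_ne_zero_iff] at hx
    obtain ⟨⟨hc, -⟩, hFmk⟩ := hx
    have h₁ := mt (hD m N (j - k) le_rfl) hc
    have h₂ := mt (hM (m - α) (k - β)) hFmk
    simp only [Set.mem_Icc, Prod.mk_le_mk]
    omega
  let e : (ℕ × ℕ) × (ℤ × ℤ) ≃ (ℤ × ℤ) × (ℕ × ℕ) :=
    { toFun := fun y => ((y.1.1 + y.2.1, y.1.2 + y.2.2), y.1)
      invFun := fun x => (x.2, (x.1.1 - x.2.1, x.1.2 - x.2.2))
      left_inv := fun y => by simp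
      right_inv := fun x => by simp }
  simp only [substX1, ps2Smul, if_pos (Int.natCast_nonneg N), Int.toNat_natCast, smul_finsum,
    smul_smul]
  rw [← finsum_curry _ hfin, ← finsum_comp_equiv e]
  refine finsum_congr fun y => ?_
  simp only [e, Equiv.coe_fn_mk, add_sub_cancel_left, sub_add_eq_sub_sub, mul_comm]

lemma substX1_ps2Smul (hφ : PowerSeries.constantCoeff (R := L) φ = Xl) (hs : substMv p φ ≠ 0)
    (hF : IsLT2 F) : substX1 φ (ps2Smul p F) = lzSmul (substMv p φ) (substX1 φ F) := by
  funext w n j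
  rcases lt_or_ge n 0 with hn | hn
  · refine (if_neg (by omega)).trans (finsum_eq_zero_of_forall_eq_zero fun AB => ?_).symm
    rw [substX1, if_neg (by omega), smul_zero]
  lift n to ℕ using hn with N
  rw [substX1_ps2Smul_eq_finsum hφ hF, lzSmul_substMv_substX1_eq_finsum hs,
    ← finsum_curry₃ _ (hasFiniteSupport_substTerm hφ hF w N j), finsum_substTerm hφ hF]

end Multiplicativity

end Associate

section Cancellation

/-- The truncation conditions on a raw series in `(z, x)` that elements of `ℰ(W)((z))` satisfy. -/
def IsZXTrunc {α M : Type*} [Zero M] (Y : α → ℤ → ℤ → M) : Prop :=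
  (∃ n₀ : ℤ, ∀ w n j, n < n₀ → Y w n j = 0) ∧ ∀ w n, ∃ j₀ : ℤ, ∀ j < j₀, Y w n j = 0

lemma IsZXTrunc.sub {α M : Type*} [AddGroup M] {Y Y' : α → ℤ → ℤ → M} (hY : IsZXTrunc Y)
    (hY' : IsZXTrunc Y') : IsZXTrunc (Y - Y') := by
  obtain ⟨⟨n₀, hn₀⟩, hj⟩ := hY
  obtain ⟨⟨n₀', hn₀'⟩, hj'⟩ := hY'
  refine ⟨⟨min n₀ n₀', fun w n j hn => ?_⟩, fun w n => ?_⟩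
  · simp [hn₀ w n j (by omega), hn₀' w n j (by omega)]
  · obtain ⟨j₀, h⟩ := hj w n
    obtain ⟨j₀', h'⟩ := hj' w n
    exact ⟨min j₀ j₀', fun j hj => by simp [h j (by omega), h' j (by omega)]⟩

variable {s : LZ} {Y Y' : W → ℤ → ℤ → W}

lemma hasFiniteSupport_lzSmul (hY : IsZXTrunc Y) (w : W) (n j : ℤ) :
    HasFiniteSupport fun AB : ℕ × ℤ => lzCoeff s AB.1 AB.2 • Y w (n - AB.1) (j - AB.2) := by
  obtain ⟨⟨n₀, hn₀⟩, hj⟩ := hY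
  choose j₀ hj₀ using hj w
  refine ((Finset.range ((n - n₀).toNat + 1)).finite_toSet.biUnion fun A _ =>
    (Set.finite_singleton A).prod (Set.finite_Icc (PowerSeries.coeff (R := L) A s).order
      (j - j₀ (n - A)))).subset fun ⟨A, B⟩ hAB => ?_
  obtain ⟨hs, hY⟩ := smul_ne_zero_iff.mp hAB
  have hA : n₀ ≤ n - A := not_lt.mp fun h => hY (hn₀ w _ _ h)
  have hB₁ : (PowerSeries.coeff (R := L) A s).order ≤ B := HahnSeries.order_le_of_coeff_ne_zero hs
  have hB₂ : j₀ (n - A) ≤ j - B := not_lt.mp fun h => hY (hj₀ _ _ h)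
  simp only [Set.mem_iUnion, Finset.coe_range, Set.mem_Iio, Set.mem_prod,
    Set.mem_singleton_iff, Set.mem_Icc]
  exact ⟨A, by omega, rfl, hB₁, by omega⟩

lemma lzSmul_sub (hY : IsZXTrunc Y) (hY' : IsZXTrunc Y') :
    lzSmul s (Y - Y') = lzSmul s Y - lzSmul s Y' := by
  funext w n j
  simp only [lzSmul, Pi.sub_apply, smul_sub]
  exact finsum_sub_distrib (hasFiniteSupport_lzSmul hY w n j)
    (hasFiniteSupport_lzSmul hY' w n j)

lemma eq_zero_of_lzSmul_eq_zero (hs : s ≠ 0) (hY : IsZXTrunc Y) (h : lzSmul s Y = 0) :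
    Y = 0 := by
  by_contra hne
  obtain ⟨w, n, j, hwnj⟩ : ∃ w n j, Y w n j ≠ 0 := by
    by_contra! h'
    exact hne (funext fun w => funext fun n => funext (h' w n))
  obtain ⟨⟨n₀, hn₀⟩, hj⟩ := hY
  obtain ⟨n₁, hn₁, hn₁_min⟩ := Int.exists_least_of_bdd (P := fun n' => ∃ j', Y w n' j' ≠ 0)
    ⟨n₀, fun n' ⟨j', h'⟩ => not_lt.mp fun hlt => h' (hn₀ w n' j' hlt)⟩ ⟨n, j, hwnj⟩
  obtain ⟨j₀, hj₀⟩ := hj w n₁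
  obtain ⟨j₁, hj₁, hj₁_min⟩ := Int.exists_least_of_bdd (P := fun j' => Y w n₁ j' ≠ 0)
    ⟨j₀, fun j' h' => not_lt.mp fun hlt => h' (hj₀ j' hlt)⟩ hn₁
  have hs' : ∃ A, PowerSeries.coeff (R := L) A s ≠ 0 := by
    by_contra! h'
    exact hs (PowerSeries.ext fun A => by simp [h' A])
  set A₁ := Nat.find hs'
  set B₁ := (PowerSeries.coeff (R := L) A₁ s).order
  have hsA₁B₁ : lzCoeff s A₁ B₁ ≠ 0 := mt HahnSeries.coeff_order_eq_zero.mp (Nat.find_spec hs')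
  have hY_low {n' j' : ℤ} (h' : n' < n₁ ∨ (n' = n₁ ∧ j' < j₁)) : Y w n' j' = 0 := by
    by_contra hne'
    rcases h' with h' | ⟨rfl, h'⟩
    · exact (hn₁_min n' ⟨j', hne'⟩).not_gt h'
    · exact (hj₁_min j' hne').not_gt h'
  -- the leading coefficients of `s` and `Y w` multiply to a coefficient of `s • Y w`
  have hlead : lzSmul s Y w (n₁ + A₁) (j₁ + B₁) = lzCoeff s A₁ B₁ • Y w n₁ j₁ := by
    refine (finsum_eq_single _ (A₁, B₁) fun ⟨A, B⟩ hAB => ?_).trans (by simp)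
    dsimp only
    rcases lt_trichotomy A A₁ with hA | rfl | hA
    · simp [lzCoeff, not_not.mp (Nat.find_min hs' hA)]
    · rcases lt_or_gt_of_ne (fun hB : B = B₁ => hAB (by rw [hB])) with hB | hB
      · rw [lzCoeff, HahnSeries.coeff_eq_zero_of_lt_order hB, zero_smul]
      · rw [hY_low (by omega), smul_zero]
    · rw [hY_low (by omega), smul_zero]
  exact smul_ne_zero hsA₁B₁ hj₁ (hlead.symm.trans (by rw [h]; rfl))

lemma eq_of_lzSmul_eq (hs : s ≠ 0) (hY : IsZXTrunc Y) (hY' : IsZXTrunc Y')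
    (h : lzSmul s Y = lzSmul s Y') : Y = Y' :=
  sub_eq_zero.mp (eq_zero_of_lzSmul_eq_zero hs (hY.sub hY')
    (by rw [lzSmul_sub hY hY', h, sub_self]))

end Cancellation

lemma isZXTrunc_of_slices {Y : W → ℤ → ℤ → W} (hYt : ∃ n₀ : ℤ, ∀ w n j, n < n₀ → Y w n j = 0)
    (hYs : ∀ n : ℤ, ∃ c : EW W, ∀ w j, (c w).coeff j = Y w n j) : IsZXTrunc Y := by
  refine ⟨hYt, fun w n => ?_⟩
  obtain ⟨c, hc⟩ := hYs n
  exact ⟨(c w).order, fun j hj => (hc w j).symm.trans (HahnSeries.coeff_eq_zero_of_lt_order hj)⟩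

/-- Whatever modifier `p` the definition of `Yφ` picks, `substX1_ps2Smul` turns its defining
equation into `p(φ(x,z),x) · Y' = p(φ(x,z),x) · Y`, and `p(φ(x,z),x)` cancels. -/
lemma Yφ_eq_substX1 {φ : LZ} (hφ : PowerSeries.constantCoeff (R := L) φ = Xl) {a b : EW W}
    (hab : IsLT2 (c2 a b)) {Y : W → ℤ → ℤ → W} (hYt : ∃ n₀ : ℤ, ∀ w n j, n < n₀ → Y w n j = 0)
    (hYs : ∀ n : ℤ, ∃ c : EW W, ∀ w j, (c w).coeff j = Y w n j) (hY : substX1 φ (c2 a b) = Y) :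
    Yφ φ a b = Y := by
  have hex : ∃ Y : W → ℤ → ℤ → W,
      (∃ n₀ : ℤ, ∀ w n j, n < n₀ → Y w n j = 0) ∧
      (∀ n : ℤ, ∃ c : EW W, ∀ w j, (c w).coeff j = Y w n j) ∧
      ∃ p : MvPowerSeries (Fin 2) ℂ, substMv p φ ≠ 0 ∧ IsLT2 (ps2Smul p (c2 a b)) ∧
        lzSmul (substMv p φ) Y = substX1 φ (ps2Smul p (c2 a b)) := by
    refine ⟨Y, hYt, hYs, 1, ?_, ?_, ?_⟩
    · rw [substMv_one]; exact one_ne_zero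
    · rwa [ps2Smul_one]
    · rw [substMv_one, lzSmul_one, ps2Smul_one, hY]
  rw [Yφ, dif_pos hex]
  obtain ⟨hYt', hYs', p, hp, -, hpY⟩ := hex.choose_spec
  refine eq_of_lzSmul_eq hp (isZXTrunc_of_slices hYt' hYs') (isZXTrunc_of_slices hYt hYs) ?_
  rw [hpY, substX1_ps2Smul hφ hp hab, hY]

lemma mkEW_eq {c : W → ℤ → W} {g : EW W} (h : ∀ w j, (g w).coeff j = c w j) : mkEW c = g := by
  have hex : ∃ g : EW W, ∀ w j, (g w).coeff j = c w j := ⟨g, h⟩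
  rw [mkEW, dif_pos hex]
  exact LinearMap.ext fun w =>
    HahnSeries.ext (funext fun j => (hex.choose_spec w j).trans (h w j).symm)

lemma exists_EW_coeff_eq {F : W → ℤ → W} (hadd : ∀ w w' j, F (w + w') j = F w j + F w' j)
    (hsmul : ∀ (r : ℂ) w j, F (r • w) j = r • F w j) (hbdd : ∀ w, ∃ j₀, ∀ j < j₀, F w j = 0) :
    ∃ c : EW W, ∀ w j, (c w).coeff j = F w j := by
  choose j₀ hj₀ using hbdd
  refine ⟨{ toFun := fun w => HahnSeries.ofSuppBddBelow (F w)
              ⟨j₀ w, fun j hj => not_lt.mp fun h => hj (hj₀ w j h)⟩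
            map_add' := fun w w' => HahnSeries.ext (funext (hadd w w'))
            map_smul' := fun r w => HahnSeries.ext (funext (hsmul r w)) }, fun w j => rfl⟩

lemma oneEW_coeff (w : W) (j : ℤ) : ((oneEW : EW W) w).coeff j = if j = 0 then w else 0 := by
  rw [oneEW, mkEW_eq (g := HahnSeries.single.linearMap (R := ℂ) (0 : ℤ)) fun w j => ?_] <;>
    simp [HahnSeries.single.linearMap, Pi.single_apply]

lemma c2_oneEW_left (b : EW W) (w : W) (m n : ℤ) :
    c2 oneEW b w m n = if m = 0 then (b w).coeff n else 0 :=
  oneEW_coeff _ m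

lemma c2_oneEW_right (a : EW W) (w : W) (m n : ℤ) :
    c2 a oneEW w m n = if n = 0 then (a w).coeff m else 0 := by
  rw [c2, oneEW_coeff]
  split_ifs <;> simp

lemma isLT2_c2_oneEW_left (b : EW W) : IsLT2 (c2 oneEW b) := fun w =>
  ⟨min (b w).order 0, fun m n h => by
    rw [c2_oneEW_left]
    split_ifs
    · exact HahnSeries.coeff_eq_zero_of_lt_order (by omega)
    · rfl⟩

lemma isLT2_c2_oneEW_right (a : EW W) : IsLT2 (c2 a oneEW) := fun w =>
  ⟨min (a w).order 0, fun m n h => by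
    rw [c2_oneEW_right]
    split_ifs
    · exact HahnSeries.coeff_eq_zero_of_lt_order (by omega)
    · rfl⟩

lemma substX1_c2_oneEW_left (φ : LZ) (b : EW W) :
    substX1 φ (c2 oneEW b) = fun w n j => if n = 0 then (b w).coeff j else 0 := by
  funext w n j
  by_cases hn : 0 ≤ n
  · rw [substX1, if_pos hn, finsum_eq_single _ (0, j) fun mk hmk => ?_]
    · simp [c2_oneEW_left, zpowR_zero, lzCoeff_one, hn.ge_iff_eq']
    · rw [c2_oneEW_left]
      split_ifs with hm
      · rw [hm, zpowR_zero, lzCoeff_one, if_neg fun h => hmk (Prod.ext hm (by omega)), zero_smul]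
      · exact smul_zero _
  · rw [substX1, if_neg hn, if_neg (by omega)]

lemma substX1_c2_oneEW_right (φ : LZ) (a : EW W) : substX1 φ (c2 a oneEW) = substAphi φ a := by
  funext w n j
  simp only [substX1, substAphi]
  split_ifs with hn
  · rw [← finsum_mem_univ, finsum_mem_inter_support_eq' _ _ (Set.range fun m : ℤ => (m, (0 : ℤ)))
      fun mk hmk => ?_, finsum_mem_range fun m m' h => (Prod.ext_iff.mp h).1]
    · simp [c2_oneEW_right]
    · refine iff_of_true trivial ⟨mk.1, Prod.ext rfl ?_⟩
      by_contra h
      exact hmk (by simp [c2_oneEW_right, Ne.symm h])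
  · rfl

lemma exists_EW_coeff_eq_substAphi {φ : LZ} (hφ : PowerSeries.constantCoeff (R := L) φ = Xl)
    (a : EW W) (n : ℤ) : ∃ c : EW W, ∀ w j, (c w).coeff j = substAphi φ a w n j := by
  rcases lt_or_ge n 0 with hn | hn
  · exact ⟨0, fun w j => by simp [substAphi, not_le.mpr hn]⟩
  obtain ⟨D, hD⟩ := exists_lzCoeff_zpowR_eq_zero hφ n.toNat
  have hfin (w : W) (j : ℤ) :
      HasFiniteSupport fun m => lzCoeff (zpowR φ m) n.toNat j • (a w).coeff m := by
    refine (Set.finite_Icc (a w).order (j - D)).subset fun m hm => ?_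
    obtain ⟨hc, ha⟩ := smul_ne_zero_iff.mp hm
    exact ⟨HahnSeries.order_le_of_coeff_ne_zero ha,
      by linarith [not_lt.mp (mt (hD m n.toNat j le_rfl) hc)]⟩
  simp only [substAphi, if_pos hn]
  refine exists_EW_coeff_eq (fun w w' j => ?_) (fun r w j => ?_) (fun w => ⟨(a w).order + D,
    fun j hj => finsum_eq_zero_of_forall_eq_zero fun m => ?_⟩)
  · simp only [map_add, HahnSeries.coeff_add, smul_add]
    exact finsum_add_distrib (hfin w j) (hfin w' j)
  · simp only [map_smul, HahnSeries.coeff_smul, smul_comm _ r, smul_finsum]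
  · rcases lt_or_ge m (a w).order with hm | hm
    · rw [HahnSeries.coeff_eq_zero_of_lt_order hm, smul_zero]
    · rw [hD m n.toNat j le_rfl (by omega), zero_smul]

lemma substAphi_zero {φ : LZ} (hφ : PowerSeries.constantCoeff (R := L) φ = Xl) (a : EW W)
    (w : W) (j : ℤ) : substAphi φ a w 0 j = (a w).coeff j := by
  rw [substAphi, if_pos le_rfl, finsum_eq_single _ j fun m hm => ?_]
  · simp [lzCoeff_zpowR_zero hφ]
  · simp [lzCoeff_zpowR_zero hφ, Ne.symm hm]

/-- For any `a(x), b(x) ∈ ℰ(W)`, the pairs `(1_W, b(x))` and `(a(x), 1_W)` are φ-quasi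
compatible with modifier `p = 1`, `Y_ℰ^φ(1_W,z)b(x) = b(x)`,
`Y_ℰ^φ(a(x),z)1_W = a(φ(x,z))` (in particular it involves only nonnegative powers of `z`),
and its constant term in `z` is `a(x)`. -/
theorem Yphi_vacuum (φ : LZ) (hφ : IsAssociate φ) (a b : EW W) :
    substMv 1 φ ≠ 0 ∧
    IsLT2 (ps2Smul 1 (c2 oneEW b)) ∧
    IsLT2 (ps2Smul 1 (c2 a oneEW)) ∧
    Yφ φ oneEW b = (fun w n j => if n = 0 then (b w).coeff j else 0) ∧
    Yφ φ a oneEW = substAphi φ a ∧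
    (∀ (w : W) (n j : ℤ), n < 0 → Yφ φ a oneEW w n j = 0) ∧
    (∀ (w : W) (j : ℤ), Yφ φ a oneEW w 0 j = (a w).coeff j) := by
  have hφ₀ := hφ.1
  have hright : Yφ φ a oneEW = substAphi φ a :=
    Yφ_eq_substX1 hφ₀ (isLT2_c2_oneEW_right a) ⟨0, fun w n j hn => if_neg (by omega)⟩
      (exists_EW_coeff_eq_substAphi hφ₀ a) (substX1_c2_oneEW_right φ a)
  refine ⟨by rw [substMv_one]; exact one_ne_zero, by rw [ps2Smul_one]; exact isLT2_c2_oneEW_left b,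
    by rw [ps2Smul_one]; exact isLT2_c2_oneEW_right a, ?_, hright,
    fun w n j hn => by rw [hright, substAphi, if_neg (by omega)],
    fun w j => by rw [hright, substAphi_zero hφ₀]⟩
  refine Yφ_eq_substX1 hφ₀ (isLT2_c2_oneEW_left b) ⟨0, fun w n j hn => if_neg (by omega)⟩
    (fun n => ⟨if n = 0 then b else 0, fun w j => ?_⟩) (substX1_c2_oneEW_left φ b)
  split_ifs <;> simp

end
end

section
/- Let W be a complex vector space. Every S_trig-local subset of ℰ(W) is compatible, and every quasi S_trig-local subset of ℰ(W) is quasi compatible. -/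
noncomputable section
open scoped Classical

variable (W : Type) [AddCommGroup W] [Module ℂ W]

variable {W}

/-- `ℂ((x₂))((x₁))` (outer variable `x₁`). -/
abbrev LL1 : Type := LaurentSeries L

/-- the element of `ℂ((x₂))((x₁))` with prescribed coefficients (coefficient of
`x₁^m x₂^n`), when it exists (else `0`). -/
def mkLL1 (c : ℤ → ℤ → ℂ) : LL1 :=
  if h : ∃ g : LL1, ∀ m n, (g.coeff m).coeff n = c m n then h.choose else 0

/-- the homogenization `x₂^D f(x₁/x₂)` of a polynomial, inside `ℂ((x₂))((x₁))`. -/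
def homog (f : Polynomial ℂ) (D : ℕ) : LL1 :=
  mkLL1 fun m n => if 0 ≤ m ∧ m + n = (D : ℤ) then f.coeff m.toNat else 0

/-- the expansion `ι_{x₂,x₁}(q(x₁/x₂)) ∈ ℂ((x₂))((x₁))` of the rational function
`q = f/g ∈ ℂ(x)` in `x₁/x₂`: it equals `ι(x₂^D f(x₁/x₂)) / ι(x₂^D g(x₁/x₂))`, division in
the field `ℂ((x₂))((x₁))`. -/
def iotaExp (f g : Polynomial ℂ) : LL1 :=
  homog f (max f.natDegree g.natDegree) / homog g (max f.natDegree g.natDegree)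

/-- multiplication of a raw two-variable series by an element of `ℂ((x₂))((x₁))`. -/
def ll1Smul (s : LL1) (F : W → ℤ → ℤ → W) : W → ℤ → ℤ → W :=
  fun w m n => ∑ᶠ ab : ℤ × ℤ, ((s.coeff ab.1).coeff ab.2) • F w (m - ab.1) (n - ab.2)

/-- multiplication of a raw two-variable series by `p(x₁/x₂)`, `p` a polynomial. -/
def ratScalarSmul (p : Polynomial ℂ) (F : W → ℤ → ℤ → W) : W → ℤ → ℤ → W :=
  fun w m n => ∑ i ∈ Finset.range (p.natDegree + 1), p.coeff i • F w (m - i) (n + i)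

/-- `U ⊆ ℰ(W)` is `S_trig`-local: for `a(x),b(x) ∈ U` there are `u_i(x),v_i(x) ∈ U` and
rational functions `q_i ∈ ℂ(x)` (written `q_i = qn_i/qd_i`) with `(x₁-x₂)^k a(x₁)b(x₂)
= (x₁-x₂)^k Σ_i ι_{x₂,x₁}(q_i(x₁/x₂)) u_i(x₂) v_i(x₁)` for some `k ∈ ℕ`. -/
def STrigLocal (U : Set (EW W)) : Prop :=
  ∀ a ∈ U, ∀ b ∈ U,
    ∃ (r : ℕ) (u v : Fin r → EW W) (qn qd : Fin r → Polynomial ℂ) (k : ℕ),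
      (∀ i, u i ∈ U) ∧ (∀ i, v i ∈ U) ∧ (∀ i, qd i ≠ 0) ∧
      ps2Smul ((MvPowerSeries.X 0 - MvPowerSeries.X 1) ^ k) (c2 a b)
        = ps2Smul ((MvPowerSeries.X 0 - MvPowerSeries.X 1) ^ k)
            (fun w m n => ∑ i, ll1Smul (iotaExp (qn i) (qd i)) (c2swap (u i) (v i)) w m n)

/-- `U ⊆ ℰ(W)` is quasi `S_trig`-local: as above but with `(x₁-x₂)^k` weakened to
`p(x₁/x₂)` for some nonzero polynomial `p(x) ∈ ℂ[x]`. -/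
def QuasiSTrigLocal (U : Set (EW W)) : Prop :=
  ∀ a ∈ U, ∀ b ∈ U,
    ∃ (r : ℕ) (u v : Fin r → EW W) (qn qd : Fin r → Polynomial ℂ) (p : Polynomial ℂ),
      (∀ i, u i ∈ U) ∧ (∀ i, v i ∈ U) ∧ (∀ i, qd i ≠ 0) ∧ p ≠ 0 ∧
      ratScalarSmul p (c2 a b)
        = ratScalarSmul p
            (fun w m n => ∑ i, ll1Smul (iotaExp (qn i) (qd i)) (c2swap (u i) (v i)) w m n)

/-!
All modifiers that occur are polynomials (`(x₁ - x₂)^k`, resp. the homogenization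
`x₂^{deg p} p(x₁/x₂)`), so multiplying by them is a finite sum of shifts.

Fix a sequence `a₁, …, a_r` in `U` and a position `l`. For a suitable modifier `μ`, the product
`∏_{j>l} μ(x_l, x_j) · a₁(x₁)⋯a_r(x_r)` is truncated from below in `x_l`: the factors only involve
`x_l, …, x_r`, so they commute with `a₁, …, a_{l-1}` and it suffices to treat the first variable.
There we induct on the length of the sequence. Locality rewrites `μ₀(x₀,x₁) c(x₀) a(x₁)` as
`μ₀ Σᵢ ι(qᵢ)(x₀,x₁) uᵢ(x₁) vᵢ(x₀)`. The remaining factors `μ(x₀,x_j)`, `j ≥ 2`, do not involve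
`x₁`, so they pass through `uᵢ(x₁)` and `ι(qᵢ)`, and by induction they truncate
`vᵢ(x₀) a₃(x₂)⋯` in `x₀`; since `ι(qᵢ) ∈ ℂ((x₁))((x₀))` is truncated below in `x₀` as well, so is
the whole product. Finally, for `μ` the product of the modifiers `μ_l` found for the individual
positions, `∏_{i<j} μ(x_i, x_j)` is a multiple of each `∏_{j>l} μ_l(x_l, x_j)`, and multiplying a
series truncated in `x_l` by a polynomial keeps it truncated in `x_l`.
-/

section RawSeries

variable {W σ : Type*} [AddCommGroup W]

open MvPolynomial

theorem sum_support_mul_smul {R M : Type*} [CommSemiring R] [AddCommMonoid M] [Module R M]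
    (Q₁ Q₂ : MvPolynomial σ R) (G : (σ →₀ ℕ) → M) :
    ∑ d ∈ (Q₁ * Q₂).support, coeff d (Q₁ * Q₂) • G d
      = ∑ e ∈ Q₁.support, ∑ f ∈ Q₂.support, (coeff e Q₁ * coeff f Q₂) • G (e + f) := by
  classical
  rw [Finset.sum_subset (support_mul Q₁ Q₂) fun d _ hd => by
    rw [notMem_support_iff.1 hd, zero_smul]]
  simp only [coeff_mul, Finset.sum_smul]
  rw [← Finset.sum_product', Finset.sum_sigma']
  refine Finset.sum_bij_ne_zero (fun x _ _ => x.2) ?_ ?_ ?_ ?_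
  · intro x _ hx
    simp only [Finset.mem_product, mem_support_iff]
    constructor <;> rintro h <;> simp [h] at hx
  · rintro ⟨d, x⟩ hx _ ⟨d', x'⟩ hx' _ rfl
    simp only [Finset.mem_sigma, Finset.HasAntidiagonal.mem_antidiagonal] at hx hx'
    rw [← hx.2, ← hx'.2]
  · rintro ⟨e, f⟩ hef hne
    refine ⟨⟨e + f, (e, f)⟩, ?_, ?_, rfl⟩
    · rw [Finset.mem_product] at hef
      simp only [Finset.mem_sigma, Finset.HasAntidiagonal.mem_antidiagonal, and_true]
      exact Finset.add_mem_add hef.1 hef.2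
    · simpa using hne
  · rintro ⟨d, x⟩ hx _
    simp only [Finset.mem_sigma, Finset.HasAntidiagonal.mem_antidiagonal] at hx
    rw [hx.2]

def TruncatedIn (s : σ) (F : (σ → ℤ) → W) : Prop :=
  ∃ N : ℤ, ∀ m : σ → ℤ, m s < N → F m = 0

theorem TruncatedIn.sum {ι : Type*} [Fintype ι] {s : σ} {H : ι → (σ → ℤ) → W}
    (h : ∀ i, TruncatedIn s (H i)) : TruncatedIn s (∑ i, H i) := by
  choose N hN using h
  obtain ⟨N₀, hN₀⟩ := Finite.exists_ge N
  refine ⟨N₀, fun m hm => ?_⟩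
  rw [Finset.sum_apply]
  exact Finset.sum_eq_zero fun i _ => hN i m (hm.trans_le (hN₀ i))

variable [Module ℂ W]

def polySmul (Q : MvPolynomial σ ℂ) (F : (σ → ℤ) → W) : (σ → ℤ) → W :=
  fun m => ∑ d ∈ Q.support, coeff d Q • F (fun t => m t - d t)

theorem polySmul_mul (Q₁ Q₂ : MvPolynomial σ ℂ) (F : (σ → ℤ) → W) :
    polySmul (Q₁ * Q₂) F = polySmul Q₁ (polySmul Q₂ F) := by
  funext m
  simp only [polySmul, sum_support_mul_smul, Finset.smul_sum, mul_smul]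
  refine Finset.sum_congr rfl fun e _ => Finset.sum_congr rfl fun f _ => ?_
  congr 3
  funext t
  push_cast [Finsupp.add_apply]
  ring

theorem polySmul_one (F : (σ → ℤ) → W) : polySmul 1 F = F := by
  funext m
  simp [polySmul, support_one]

theorem polySmul_sum {ι : Type*} (Q : MvPolynomial σ ℂ) (s : Finset ι) (H : ι → (σ → ℤ) → W) :
    polySmul Q (∑ i ∈ s, H i) = ∑ i ∈ s, polySmul Q (H i) := by
  funext m
  simp only [polySmul, Finset.sum_apply, Finset.smul_sum]
  exact Finset.sum_comm

theorem polySmul_rename {τ : Type*} {φ : σ → τ} (hφ : Function.Injective φ)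
    (Q : MvPolynomial σ ℂ) (G : (τ → ℤ) → W) (m : τ → ℤ) :
    polySmul (rename φ Q) G m
      = ∑ d ∈ Q.support, coeff d Q • G (fun t => m t - Finsupp.mapDomain φ d t) := by
  classical
  rw [polySmul, support_rename_of_injective hφ,
    Finset.sum_image fun _ _ _ _ h => Finsupp.mapDomain_injective hφ h]
  simp only [coeff_rename_mapDomain φ hφ]

theorem polySmul_rename_of_comp {τ : Type*} {φ : σ → τ} (hφ : Function.Injective φ)
    (Q : MvPolynomial σ ℂ) {F : (σ → ℤ) → W} {G : (τ → ℤ) → W} (hG : ∀ m, G m = F (m ∘ φ))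
    (m : τ → ℤ) : polySmul (rename φ Q) G m = polySmul Q F (m ∘ φ) := by
  rw [polySmul_rename hφ]
  refine Finset.sum_congr rfl fun d _ => ?_
  rw [hG]
  congr 2
  funext t
  simp [Finsupp.mapDomain_apply hφ]

theorem TruncatedIn.polySmul {s : σ} {F : (σ → ℤ) → W} (h : TruncatedIn s F)
    (Q : MvPolynomial σ ℂ) : TruncatedIn s (polySmul Q F) := by
  obtain ⟨N, hN⟩ := h
  refine ⟨N, fun m hm => Finset.sum_eq_zero fun d _ => ?_⟩
  rw [hN _ (by omega), smul_zero]

theorem TruncatedIn.polySmul_of_dvd {s : σ} {F : (σ → ℤ) → W} {P Q : MvPolynomial σ ℂ}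
    (h : TruncatedIn s (_root_.polySmul P F)) (hPQ : P ∣ Q) :
    TruncatedIn s (_root_.polySmul Q F) := by
  obtain ⟨R, rfl⟩ := hPQ
  rw [mul_comm, polySmul_mul]
  exact h.polySmul R

end RawSeries

section

open MvPolynomial

@[simp] theorem idx2_apply_zero (a b : ℕ) : idx2 a b 0 = a := by simp [idx2]

@[simp] theorem idx2_apply_one (a b : ℕ) : idx2 a b 1 = b := by simp [idx2]

theorem idx2_apply_self (d : Fin 2 →₀ ℕ) : idx2 (d 0) (d 1) = d := by
  ext t
  fin_cases t <;> simp

theorem ps2Smul_coe (q : MvPolynomial (Fin 2) ℂ) (F : W → ℤ → ℤ → W) (w : W) (m n : ℤ) :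
    ps2Smul (q : MvPowerSeries (Fin 2) ℂ) F w m n
      = ∑ d ∈ q.support, coeff d q • F w (m - d 0) (n - d 1) := by
  classical
  have hinj : Set.InjOn (fun d : Fin 2 →₀ ℕ => (d 0, d 1)) q.support := fun d _ d' _ h => by
    simp only [Prod.mk.injEq] at h
    rw [← idx2_apply_self d, ← idx2_apply_self d', h.1, h.2]
  rw [ps2Smul, finsum_eq_sum_of_support_subset (s := q.support.image fun d => (d 0, d 1)),
    Finset.sum_image hinj]
  · simp [idx2_apply_self]
  · intro ab hab
    refine Finset.mem_image.2 ⟨idx2 ab.1 ab.2, ?_, by simp⟩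
    rw [Function.mem_support] at hab
    exact mem_support_iff.2 fun h => hab (by simp [h])

theorem mvSmul_coe {r : ℕ} (Q : MvPolynomial (Fin r) ℂ) :
    mvSmul (W := W) (Q : MvPowerSeries (Fin r) ℂ) = polySmul Q := by
  funext F m
  rw [mvSmul, finsum_eq_sum_of_support_subset (s := Q.support)]
  · simp [polySmul]
  · intro k hk
    rw [Function.mem_support] at hk
    exact mem_support_iff.2 fun h => hk (by simp [h])

theorem pair_injective {σ : Type*} {i j : σ} (hij : i ≠ j) : Function.Injective ![i, j] := by
  intro a b h
  fin_cases a <;> fin_cases b <;> simp_all [eq_comm]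

theorem mapDomain_pair {σ : Type*} (i j : σ) (d : Fin 2 →₀ ℕ) :
    Finsupp.mapDomain ![i, j] d = Finsupp.single i (d 0) + Finsupp.single j (d 1) := by
  conv_lhs => rw [← idx2_apply_self d]
  simp [idx2, Finsupp.mapDomain_add, Finsupp.mapDomain_single]

theorem pPair_coe {r : ℕ} (q : MvPolynomial (Fin 2) ℂ) {i j : Fin r} (hij : i ≠ j) :
    pPair (q : MvPowerSeries (Fin 2) ℂ) i j = ↑(rename ![i, j] q) := by
  classical
  ext dd
  rw [MvPowerSeries.coeff_apply, coeff_coe, pPair]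
  split_ifs with hc
  · have hdd : dd = Finsupp.mapDomain ![i, j] (idx2 (dd i) (dd j)) := by
      ext l
      rw [mapDomain_pair, idx2_apply_zero, idx2_apply_one]
      by_cases hl : l = i
      · simp [hl, hij.symm]
      by_cases hl' : l = j
      · simp [hl', hij]
      simp [hc l hl hl', Ne.symm hl, Ne.symm hl']
    conv_rhs => rw [hdd]
    rw [coeff_rename_mapDomain _ (pair_injective hij), coeff_coe]
  · push Not at hc
    obtain ⟨l, hli, hlj, hl⟩ := hc
    refine (coeff_rename_eq_zero _ _ _ fun u hu => absurd ?_ hl).symm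
    rw [← hu, mapDomain_pair]
    simp [Ne.symm hli, Ne.symm hlj]

def bigPoly (r : ℕ) (q : MvPolynomial (Fin 2) ℂ) : MvPolynomial (Fin r) ℂ :=
  ∏ ij ∈ Finset.univ.filter (fun ij : Fin r × Fin r => ij.1 < ij.2), rename ![ij.1, ij.2] q

theorem bigP_coe (r : ℕ) (q : MvPolynomial (Fin 2) ℂ) :
    bigP r (q : MvPowerSeries (Fin 2) ℂ) = ↑(bigPoly r q) := by
  rw [bigP, bigPoly]
  conv_rhs => rw [← coeToMvPowerSeries.ringHom_apply, map_prod]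
  exact Finset.prod_congr rfl fun ij hij => pPair_coe q (Finset.mem_filter.1 hij).2.ne

theorem coe_X_sub_X_pow (k : ℕ) :
    (((X 0 - X 1) ^ k : MvPolynomial (Fin 2) ℂ) : MvPowerSeries (Fin 2) ℂ)
      = (MvPowerSeries.X 0 - MvPowerSeries.X 1) ^ k := by
  simp only [← coeToMvPowerSeries.ringHom_apply, map_pow, map_sub]
  simp [coeToMvPowerSeries.ringHom_apply, coe_X]

/-- `prodCoeff` for lists, with exponent vectors indexed by `ℕ`, so that the induction on the
first variable can delete and insert variables without dependent types. -/
def listProdCoeff : List (EW W) → (ℕ → ℤ) → W → W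
  | [], _, w => w
  | a :: t, m, w => (a (listProdCoeff t (fun s => m (s + 1)) w)).coeff (m 0)

def chainPoly (n : ℕ) (q : MvPolynomial (Fin 2) ℂ) : MvPolynomial ℕ ℂ :=
  ∏ j ∈ Finset.range n, rename ![0, j + 1] q

def skipOne (t : ℕ) : ℕ := if t = 0 then 0 else t + 1

theorem skipOne_injective : Function.Injective skipOne := by
  intro a b h
  unfold skipOne at h
  split_ifs at h <;> omega

theorem one_notMem_range_skipOne : 1 ∉ Set.range skipOne := by
  rintro ⟨t, ht⟩
  unfold skipOne at ht
  split_ifs at ht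
  omega

theorem chainPoly_dvd {μ μ' : MvPolynomial (Fin 2) ℂ} (h : μ ∣ μ') (n : ℕ) :
    chainPoly n μ ∣ chainPoly n μ' :=
  Finset.prod_dvd_prod_of_dvd _ _ fun _ _ => map_dvd _ h

theorem chainPoly_succ (n : ℕ) (q : MvPolynomial (Fin 2) ℂ) :
    chainPoly (n + 1) q = rename skipOne (chainPoly n q) * rename ![0, 1] q := by
  rw [chainPoly, Finset.prod_range_succ', chainPoly, map_prod]
  congr 1
  refine Finset.prod_congr rfl fun j _ => ?_
  rw [rename_rename]
  congr 2
  funext i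
  fin_cases i <;> simp [skipOne]

/-- The series `S(x₀,x₁) · u(x₁) E(x₀, x₂, x₃, …)`; the exponent vector passed to `E` is that of
`(x₀, x₂, x₃, …)`, i.e. the slot of `x₁` is removed. -/
def swapTerm (S : LL1) (u : EW W) (E : (ℕ → ℤ) → W) : (ℕ → ℤ) → W :=
  fun m => ∑ᶠ ab : ℤ × ℤ, (S.coeff ab.1).coeff ab.2 •
    (u (E (Function.update (m ∘ skipOne) 0 (m 0 - ab.1)))).coeff (m 1 - ab.2)

theorem swapTerm_listProdCoeff (S : LL1) (u v : EW W) (tl : List (EW W)) (w : W) (m : ℕ → ℤ) :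
    swapTerm S u (fun k => listProdCoeff (v :: tl) k w) m
      = ll1Smul S (c2swap u v) (listProdCoeff tl (fun t => m (t + 2)) w) (m 0) (m 1) := by
  simp [swapTerm, ll1Smul, c2swap, listProdCoeff, skipOne]

theorem TruncatedIn.swapTerm {E : (ℕ → ℤ) → W} (hE : TruncatedIn 0 E) (S : LL1) (u : EW W) :
    TruncatedIn 0 (_root_.swapTerm S u E) := by
  obtain ⟨N, hN⟩ := hE
  refine ⟨N + S.order, fun m hm => ?_⟩
  refine (finsum_congr fun ab => ?_).trans finsum_zero
  by_cases ha : ab.1 < S.order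
  · simp [HahnSeries.coeff_eq_zero_of_lt_order ha]
  · rw [hN _ (by rw [Function.update_self]; omega)]
    simp

theorem finite_support_coeff_smul_coeff (S : LL1) (f : ℤ → HahnSeries ℤ W) {A : ℤ}
    (hf : ∀ a, A < a → f a = 0) (n : ℤ) :
    (Function.support fun ab : ℤ × ℤ =>
      (S.coeff ab.1).coeff ab.2 • (f ab.1).coeff (n - ab.2)).Finite := by
  refine ((Set.finite_Icc S.order A).biUnion fun a _ => (Set.finite_singleton a).prod
    (Set.finite_Icc (S.coeff a).order (n - (f a).order))).subset ?_
  rintro ⟨a, b⟩ hab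
  obtain ⟨h1, h2⟩ := smul_ne_zero_iff.1 hab
  dsimp only at h1 h2
  have haS : S.order ≤ a := by
    by_contra h
    exact h1 (by simp [HahnSeries.coeff_eq_zero_of_lt_order (not_le.1 h)])
  have haA : a ≤ A := by
    by_contra h
    exact h2 (by simp [hf a (not_le.1 h)])
  have hb : (S.coeff a).order ≤ b := by
    by_contra h
    exact h1 (HahnSeries.coeff_eq_zero_of_lt_order (not_le.1 h))
  have hb' : b ≤ n - (f a).order := by
    by_contra h
    exact h2 (HahnSeries.coeff_eq_zero_of_lt_order (by omega))
  simp only [Set.mem_iUnion, Set.mem_prod, Set.mem_singleton_iff, Set.mem_Icc]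
  exact ⟨a, ⟨haS, haA⟩, rfl, hb, hb'⟩

theorem update_comp_skipOne_sub (m : ℕ → ℤ) (d : ℕ →₀ ℕ) (a : ℤ) :
    (fun t => Function.update (m ∘ skipOne) 0 (m 0 - a) t - d t)
      = Function.update (fun t => m (skipOne t) - d t) 0 (m 0 - d 0 - a) := by
  funext t
  rcases t with _ | t
  · simp only [Function.update_self]
    ring
  · simp [Function.update_of_ne]

theorem swapTerm_sub_mapDomain_skipOne (S : LL1) (u : EW W) (E : (ℕ → ℤ) → W)
    (m : ℕ → ℤ) (d : ℕ →₀ ℕ) :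
    swapTerm S u E (fun t => m t - Finsupp.mapDomain skipOne d t)
      = ∑ᶠ ab : ℤ × ℤ, (S.coeff ab.1).coeff ab.2 •
          (u (E fun t => Function.update (m ∘ skipOne) 0 (m 0 - ab.1) t - d t)).coeff
            (m 1 - ab.2) := by
  have hψ : ∀ t, Finsupp.mapDomain skipOne d (skipOne t) = d t :=
    Finsupp.mapDomain_apply skipOne_injective d
  have h0 : Finsupp.mapDomain skipOne d 0 = d 0 := hψ 0
  have h1 : Finsupp.mapDomain skipOne d 1 = 0 :=
    Finsupp.mapDomain_of_notMem_range _ _ one_notMem_range_skipOne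
  refine finsum_congr fun ab => ?_
  rw [update_comp_skipOne_sub]
  simp only [Function.comp_def, hψ, h0, h1, Nat.cast_zero, sub_zero]

theorem polySmul_rename_skipOne_swapTerm (Q : MvPolynomial ℕ ℂ) (S : LL1) (u : EW W)
    {E : (ℕ → ℤ) → W} (hE : ∀ k : ℕ → ℤ, ∃ N, ∀ x < N, E (Function.update k 0 x) = 0) :
    polySmul (rename skipOne Q) (swapTerm S u E) = swapTerm S u (polySmul Q E) := by
  funext m
  have hfin : ∀ d : ℕ →₀ ℕ, (Function.support fun ab : ℤ × ℤ => (S.coeff ab.1).coeff ab.2 •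
      (u (E fun t => Function.update (m ∘ skipOne) 0 (m 0 - ab.1) t - d t)).coeff
        (m 1 - ab.2)).Finite := by
    intro d
    obtain ⟨N, hN⟩ := hE fun t => m (skipOne t) - d t
    refine finite_support_coeff_smul_coeff S
      (fun a => u (E fun t => Function.update (m ∘ skipOne) 0 (m 0 - a) t - d t))
      (A := m 0 - d 0 - N) (fun a ha => ?_) _
    rw [update_comp_skipOne_sub, hN _ (by omega), map_zero]
  rw [polySmul_rename skipOne_injective,
    Finset.sum_congr rfl fun d _ => by rw [swapTerm_sub_mapDomain_skipOne, smul_finsum],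
    sum_finsum_comm _ _ fun d _ => (hfin d).subset fun ab hab => right_ne_zero_of_smul hab]
  refine finsum_congr fun ab => ?_
  simp only [polySmul, map_sum, map_smul, HahnSeries.coeff_sum, HahnSeries.coeff_smul,
    Finset.smul_sum]
  exact Finset.sum_congr rfl fun d _ => smul_comm _ _ _

/-- Common form of both locality notions: the modifier `μ` ranges over a submonoid `M`, and the
expansions `ι_{x₂,x₁}(qᵢ(x₁/x₂))` are replaced by arbitrary elements of `ℂ((x₂))((x₁))`. -/
def IsSwapLocal (M : Submonoid (MvPolynomial (Fin 2) ℂ)) (U : Set (EW W)) : Prop :=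
  ∀ a ∈ U, ∀ b ∈ U, ∃ (k : ℕ) (u v : Fin k → EW W) (S : Fin k → LL1), ∃ μ ∈ M,
    (∀ i, v i ∈ U) ∧
      ps2Smul ↑μ (c2 a b) = ps2Smul ↑μ (fun w m n => ∑ i, ll1Smul (S i) (c2swap (u i) (v i)) w m n)

theorem polySmul_rename_pair (μ : MvPolynomial (Fin 2) ℂ) (G : W → ℤ → ℤ → W)
    (y : (ℕ → ℤ) → W) (m : ℕ → ℤ) :
    polySmul (rename ![0, 1] μ) (fun k => G (y fun t => k (t + 2)) (k 0) (k 1)) m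
      = ps2Smul ↑μ G (y fun t => m (t + 2)) (m 0) (m 1) := by
  rw [polySmul_rename (pair_injective zero_ne_one), ps2Smul_coe]
  refine Finset.sum_congr rfl fun d _ => ?_
  simp [mapDomain_pair]

theorem polySmul_listProdCoeff_swap {c a : EW W} {k : ℕ} {u v : Fin k → EW W} {S : Fin k → LL1}
    {μ : MvPolynomial (Fin 2) ℂ}
    (hrel : ps2Smul ↑μ (c2 c a)
      = ps2Smul ↑μ (fun w m n => ∑ i, ll1Smul (S i) (c2swap (u i) (v i)) w m n))
    (tl : List (EW W)) (w : W) :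
    polySmul (rename ![0, 1] μ) (fun m => listProdCoeff (c :: a :: tl) m w)
      = polySmul (rename ![0, 1] μ)
          (∑ i, swapTerm (S i) (u i) (fun m => listProdCoeff (v i :: tl) m w)) := by
  have hsum : ∑ i, swapTerm (S i) (u i) (fun m => listProdCoeff (v i :: tl) m w)
      = fun m => ∑ i, ll1Smul (S i) (c2swap (u i) (v i))
          (listProdCoeff tl (fun t => m (t + 2)) w) (m 0) (m 1) := by
    funext m
    simp only [Finset.sum_apply, swapTerm_listProdCoeff]
  funext m
  rw [hsum]
  calc _ = ps2Smul ↑μ (c2 c a) (listProdCoeff tl (fun t => m (t + 2)) w) (m 0) (m 1) :=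
        polySmul_rename_pair μ (c2 c a) (fun k => listProdCoeff tl k w) m
    _ = _ := by
        rw [hrel]
        exact (polySmul_rename_pair μ _ (fun k => listProdCoeff tl k w) m).symm

theorem exists_listProdCoeff_update_eq_zero (v : EW W) (tl : List (EW W)) (w : W)
    (k : ℕ → ℤ) : ∃ N, ∀ x < N, listProdCoeff (v :: tl) (Function.update k 0 x) w = 0 := by
  refine ⟨(v (listProdCoeff tl (fun s => k (s + 1)) w)).order, fun x hx => ?_⟩
  simpa [listProdCoeff] using HahnSeries.coeff_eq_zero_of_lt_order hx

theorem IsSwapLocal.exists_chainPoly_truncatedIn {M : Submonoid (MvPolynomial (Fin 2) ℂ)}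
    {U : Set (EW W)} (hU : IsSwapLocal M U) (ts : List (EW W)) :
    ∀ c ∈ U, (∀ t ∈ ts, t ∈ U) → ∃ μ ∈ M, ∀ w,
      TruncatedIn 0 (polySmul (chainPoly ts.length μ) (fun m => listProdCoeff (c :: ts) m w)) := by
  induction ts with
  | nil =>
    refine fun c _ _ => ⟨1, one_mem M, fun w => ⟨(c w).order, fun m hm => ?_⟩⟩
    simpa [chainPoly, polySmul_one, listProdCoeff] using HahnSeries.coeff_eq_zero_of_lt_order hm
  | cons a tl ih =>
    intro c hc hts
    obtain ⟨k, u, v, S, μ₀, hμ₀, hv, hrel⟩ := hU c hc a (hts a List.mem_cons_self)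
    choose μ hμ htrunc using
      fun i => ih (v i) (hv i) fun t ht => hts t (List.mem_cons_of_mem a ht)
    refine ⟨μ₀ * ∏ i, μ i, mul_mem hμ₀ (prod_mem fun i _ => hμ i), fun w => ?_⟩
    set q := μ₀ * ∏ i, μ i
    set T := ∑ i, swapTerm (S i) (u i) (fun m => listProdCoeff (v i :: tl) m w)
    have hchain : polySmul (chainPoly (tl.length + 1) q) (fun m => listProdCoeff (c :: a :: tl) m w)
        = polySmul (rename ![0, 1] (∏ i, μ i) * rename ![0, 1] μ₀)
            (polySmul (rename skipOne (chainPoly tl.length q)) T) := by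
      have hsplit : chainPoly (tl.length + 1) q = rename ![0, 1] (∏ i, μ i)
          * rename skipOne (chainPoly tl.length q) * rename ![0, 1] μ₀ := by
        rw [chainPoly_succ, map_mul]
        ring
      rw [hsplit, polySmul_mul, polySmul_listProdCoeff_swap hrel, ← polySmul_mul, mul_right_comm,
        polySmul_mul]
    have hparts : ∀ i, TruncatedIn 0 (swapTerm (S i) (u i)
        (polySmul (chainPoly tl.length q) (fun m => listProdCoeff (v i :: tl) m w))) :=
      fun i => ((htrunc i w).polySmul_of_dvd (chainPoly_dvd
        ((Finset.dvd_prod_of_mem μ (Finset.mem_univ i)).mul_left μ₀) _)).swapTerm _ _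
    rw [List.length_cons, hchain, polySmul_sum]
    rw [Finset.sum_congr rfl fun i _ => polySmul_rename_skipOne_swapTerm _ _ _
      (E := fun m => listProdCoeff (v i :: tl) m w) (exists_listProdCoeff_update_eq_zero _ _ w)]
    exact (TruncatedIn.sum hparts).polySmul _

def groupPoly (r : ℕ) (l : Fin r) (q : MvPolynomial (Fin 2) ℂ) : MvPolynomial (Fin r) ℂ :=
  ∏ j ∈ Finset.univ.filter (l < ·), rename ![l, j] q

theorem groupPoly_dvd {μ μ' : MvPolynomial (Fin 2) ℂ} (h : μ ∣ μ') (r : ℕ) (l : Fin r) :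
    groupPoly r l μ ∣ groupPoly r l μ' :=
  Finset.prod_dvd_prod_of_dvd _ _ fun _ _ => map_dvd _ h

theorem groupPoly_dvd_bigPoly (r : ℕ) (l : Fin r) (q : MvPolynomial (Fin 2) ℂ) :
    groupPoly r l q ∣ bigPoly r q := by
  classical
  rw [groupPoly, ← Finset.prod_image (f := fun ij : Fin r × Fin r => rename ![ij.1, ij.2] q)
    (g := Prod.mk l) fun _ _ _ _ h => (Prod.mk.inj h).2]
  refine Finset.prod_dvd_prod_of_subset _ _ _ fun ij hij => ?_
  obtain ⟨j, hj, rfl⟩ := Finset.mem_image.1 hij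
  simpa using hj

theorem rename_val_groupPoly_zero (r : ℕ) (q : MvPolynomial (Fin 2) ℂ) :
    rename Fin.val (groupPoly (r + 1) 0 q) = chainPoly r q := by
  rw [groupPoly, Finset.prod_filter, Fin.prod_univ_succ, chainPoly, ← Fin.prod_univ_eq_prod_range]
  simp only [lt_self_iff_false, if_false, one_mul, Fin.succ_pos, if_true, map_prod, rename_rename]
  refine Finset.prod_congr rfl fun j _ => congrArg (rename · q) ?_
  funext i
  fin_cases i <;> simp

theorem rename_succ_groupPoly (r : ℕ) (l : Fin r) (q : MvPolynomial (Fin 2) ℂ) :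
    rename Fin.succ (groupPoly r l q) = groupPoly (r + 1) l.succ q := by
  rw [groupPoly, groupPoly, Finset.prod_filter, Finset.prod_filter, Fin.prod_univ_succ, map_prod]
  simp only [Fin.succ_lt_succ_iff, apply_ite, map_one, rename_rename, Fin.not_lt_zero,
    if_false, one_mul]
  refine Finset.prod_congr rfl fun j _ => if_congr Iff.rfl (congrArg (rename · q) ?_) rfl
  funext i
  fin_cases i <;> rfl

theorem listProdCoeff_ofFn {r : ℕ} (as : Fin r → EW W) (m : ℕ → ℤ) (w : W) :
    listProdCoeff (List.ofFn as) m w = prodCoeff r as (fun i => m i) w := by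
  induction r generalizing m with
  | zero => rfl
  | succ r ih => simp [List.ofFn_succ, listProdCoeff, prodCoeff, ih]

theorem polySmul_chainPoly_listProdCoeff {r : ℕ} (q : MvPolynomial (Fin 2) ℂ)
    (as : Fin (r + 1) → EW W) (w : W) (m : ℕ → ℤ) :
    polySmul (chainPoly r q) (fun k => listProdCoeff (List.ofFn as) k w) m
      = polySmul (groupPoly (r + 1) 0 q) (fun k => prodCoeff (r + 1) as k w) (fun i => m i) := by
  rw [← rename_val_groupPoly_zero]
  exact polySmul_rename_of_comp Fin.val_injective _ (fun k => listProdCoeff_ofFn as k w) m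

theorem polySmul_groupPoly_succ {r : ℕ} (l : Fin r) (q : MvPolynomial (Fin 2) ℂ)
    (as : Fin (r + 1) → EW W) (w : W) (m : Fin (r + 1) → ℤ) :
    polySmul (groupPoly (r + 1) l.succ q) (fun k => prodCoeff (r + 1) as k w) m
      = ((as 0) (polySmul (groupPoly r l q)
          (fun k => prodCoeff r (fun t => as t.succ) k w) (Fin.tail m))).coeff (m 0) := by
  rw [← rename_succ_groupPoly, polySmul_rename (Fin.succ_injective r), polySmul, map_sum,
    HahnSeries.coeff_sum]
  refine Finset.sum_congr rfl fun d _ => ?_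
  have h0 : Finsupp.mapDomain Fin.succ d 0 = 0 :=
    Finsupp.mapDomain_of_notMem_range _ _ fun ⟨t, ht⟩ => Fin.succ_ne_zero t ht
  simp [prodCoeff, h0, Finsupp.mapDomain_apply (Fin.succ_injective r), Fin.tail]

theorem IsSwapLocal.exists_groupPoly_truncatedIn {M : Submonoid (MvPolynomial (Fin 2) ℂ)}
    {U : Set (EW W)} (hU : IsSwapLocal M U) {r : ℕ} (l : Fin r) (as : Fin r → EW W)
    (has : ∀ i, as i ∈ U) : ∃ μ ∈ M, ∀ w,
      TruncatedIn l (polySmul (groupPoly r l μ) (fun m => prodCoeff r as m w)) := by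
  induction r with
  | zero => exact l.elim0
  | succ r ih =>
    cases l using Fin.cases with
    | zero =>
      obtain ⟨μ, hμ, h⟩ := hU.exists_chainPoly_truncatedIn (List.ofFn fun i => as i.succ) (as 0)
        (has 0) (by simp [List.mem_ofFn, has])
      refine ⟨μ, hμ, fun w => ?_⟩
      obtain ⟨N, hN⟩ := h w
      refine ⟨N, fun m hm => ?_⟩
      have := hN (fun t => if h : t < r + 1 then m ⟨t, h⟩ else 0) (by simpa using hm)
      have hm' : (fun i : Fin (r + 1) => if h : (i : ℕ) < r + 1 then m ⟨i, h⟩ else 0) = m :=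
        funext fun i => dif_pos i.isLt
      rwa [List.length_ofFn, ← List.ofFn_succ, polySmul_chainPoly_listProdCoeff, hm'] at this
    | succ l =>
      obtain ⟨μ, hμ, h⟩ := ih l (fun t => as t.succ) fun t => has t.succ
      refine ⟨μ, hμ, fun w => ?_⟩
      obtain ⟨N, hN⟩ := h w
      refine ⟨N, fun m hm => ?_⟩
      rw [polySmul_groupPoly_succ, hN (Fin.tail m) hm, map_zero, HahnSeries.coeff_zero]

theorem IsSwapLocal.exists_isLTrunc {M : Submonoid (MvPolynomial (Fin 2) ℂ)}
    {U : Set (EW W)} (hU : IsSwapLocal M U) {r : ℕ} (as : Fin r → EW W)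
    (has : ∀ i, as i ∈ U) : ∃ μ ∈ M,
      IsLTrunc (fun w => mvSmul (bigP r ↑μ) (fun m => prodCoeff r as m w)) := by
  choose μ hμ htrunc using fun l => hU.exists_groupPoly_truncatedIn l as has
  refine ⟨∏ l, μ l, prod_mem fun l _ => hμ l, fun w => ?_⟩
  have h : ∀ l, TruncatedIn l (polySmul (bigPoly r (∏ l, μ l)) (fun m => prodCoeff r as m w)) :=
    fun l => (htrunc l w).polySmul_of_dvd ((groupPoly_dvd
      (Finset.dvd_prod_of_mem μ (Finset.mem_univ l)) r l).trans (groupPoly_dvd_bigPoly r l _))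
  choose N hN using h
  obtain ⟨N₀, hN₀⟩ := Finite.exists_ge N
  refine ⟨N₀, fun m ⟨l, hl⟩ => ?_⟩
  rw [bigP_coe, mvSmul_coe]
  exact hN l m (hl.trans_le (hN₀ l))

theorem ps2Smul_homogenize (p : Polynomial ℂ) (G : W → ℤ → ℤ → W) (w : W) (m n : ℤ) :
    ps2Smul ↑(p.homogenize p.natDegree) G w m n = ratScalarSmul p G w m (n - p.natDegree) := by
  classical
  set D := p.natDegree
  have hinj : Set.InjOn (fun i => idx2 i (D - i)) ↑(Finset.range (D + 1)) := fun i _ j _ h => by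
    simpa using congrArg (· 0) h
  have hsub : (p.homogenize D).support ⊆ (Finset.range (D + 1)).image fun i => idx2 i (D - i) := by
    intro d hd
    have hdeg := Polynomial.sum_eq_natDegree_of_mem_support_homogenize p hd
    refine Finset.mem_image.2 ⟨d 0, Finset.mem_range.2 (by omega), ?_⟩
    conv_rhs => rw [← idx2_apply_self d]
    congr 1
    omega
  rw [ps2Smul_coe, Finset.sum_subset hsub fun d _ hd => by rw [notMem_support_iff.1 hd, zero_smul],
    Finset.sum_image hinj, ratScalarSmul]
  refine Finset.sum_congr rfl fun i hi => ?_
  have hiD : i ≤ D := Nat.lt_succ_iff.1 (Finset.mem_range.1 hi)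
  rw [Polynomial.coeff_homogenize]
  simp only [idx2_apply_zero, idx2_apply_one, Nat.add_sub_cancel' hiD, if_true]
  congr 2
  omega

theorem isSwapLocal_of_sTrigLocal {U : Set (EW W)} (h : STrigLocal U) :
    IsSwapLocal (Submonoid.powers (X 0 - X 1)) U := by
  intro a ha b hb
  obtain ⟨r, u, v, qn, qd, k, -, hv, -, hrel⟩ := h a ha b hb
  exact ⟨r, u, v, fun i => iotaExp (qn i) (qd i), _, ⟨k, rfl⟩, hv, by rwa [coe_X_sub_X_pow]⟩

theorem isSwapLocal_of_quasiSTrigLocal {U : Set (EW W)} (h : QuasiSTrigLocal U) :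
    IsSwapLocal (nonZeroDivisors (MvPolynomial (Fin 2) ℂ)) U := by
  intro a ha b hb
  obtain ⟨r, u, v, qn, qd, p, -, hv, -, hp, hrel⟩ := h a ha b hb
  refine ⟨r, u, v, fun i => iotaExp (qn i) (qd i), p.homogenize p.natDegree,
    mem_nonZeroDivisors_of_ne_zero ((Polynomial.homogenize_eq_zero_iff le_rfl).not.2 hp), hv, ?_⟩
  funext w m n
  rw [ps2Smul_homogenize, ps2Smul_homogenize, hrel]

end

/-- Every `S_trig`-local subset of `ℰ(W)` is compatible, and every quasi `S_trig`-local
subset of `ℰ(W)` is quasi compatible. -/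
theorem strig_local_implies_compat (U : Set (EW W)) :
    (STrigLocal U → SetCompat U) ∧ (QuasiSTrigLocal U → SetQuasiCompat U) := by
  refine ⟨fun h r as has => ?_, fun h r as has => ?_⟩
  · obtain ⟨μ, ⟨k, rfl⟩, htrunc⟩ := (isSwapLocal_of_sTrigLocal h).exists_isLTrunc as has
    exact ⟨k, by rwa [← coe_X_sub_X_pow]⟩
  · obtain ⟨μ, hμ, htrunc⟩ := (isSwapLocal_of_quasiSTrigLocal h).exists_isLTrunc as has
    exact ⟨μ, fun h0 => nonZeroDivisors.ne_zero hμ (MvPolynomial.coe_eq_zero_iff.1 h0), htrunc⟩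

end
end
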